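/- Let R(x) = e^{−f(x)} be a probability density on ℝ^d with f 1-strongly convex, L-smooth, and global minimum at 0, and let Q₀ = N(0, I_d). Then for all α ≥ 1, D_α(R ‖ Q₀) ≤ d ln L. -/

import Mathlib

open MeasureTheory Real

/-- The α-Rényi divergence between two probability densities on `ℝ^d`. -/
noncomputable def renyiDiv {d : ℕ} (α : ℝ) (μ ν : EuclideanSpace ℝ (Fin d) → ℝ) : ℝ :=
  (α - 1)⁻¹ * Real.log (∫ x, μ x ^ α * ν x ^ (1 - α))

/-- Density of the isotropic Gaussian `N(m, σ²I_d)` on `ℝ^d`. -/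
noncomputable def gaussDensity {d : ℕ} (σ2 : ℝ) (m : EuclideanSpace ℝ (Fin d)) :
    EuclideanSpace ℝ (Fin d) → ℝ :=
  fun x => (2 * π * σ2) ^ (-(d : ℝ) / 2) * Real.exp (-‖x - m‖ ^ 2 / (2 * σ2))

/-! Restricting `f` to the lines through its minimiser `0` and integrating the Hessian bounds
twice gives `f 0 + ‖x‖²/2 ≤ f x ≤ f 0 + L‖x‖²/2`. Comparing `∫ e^{-f} = 1` with the Gaussian
integral of the upper bound yields `e^{-f 0} ≤ (L/2π)^{d/2}`, and then the lower bound gives the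
pointwise density ratio `e^{-f} ≤ L^{d/2} Q₀`. A density ratio bounded by `C` bounds every
`D_α` with `α ≥ 1` by `log C = (d/2) log L`. -/

open Set

lemma add_div_two_le_of_hasDerivAt_of_le {g g' g'' : ℝ → ℝ} {m : ℝ}
    (hg : ∀ t, HasDerivAt g (g' t) t) (hg' : ∀ t, HasDerivAt g' (g'' t) t)
    (h0 : g' 0 = 0) (hm : ∀ t, m ≤ g'' t) :
    g 0 + m / 2 ≤ g 1 := by
  have hu' : ∀ t, HasDerivAt (fun t => g' t - m * t) (g'' t - m) t := fun t => by
    simpa using (hg' t).fun_sub ((hasDerivAt_id t).const_mul m)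
  have hu : ∀ t, HasDerivAt (fun t => g t - m / 2 * t ^ 2) (g' t - m * t) t := fun t =>
    ((hg t).fun_sub ((hasDerivAt_pow 2 t).const_mul (m / 2))).congr_deriv (by ring)
  have hu'_mono : Monotone fun t => g' t - m * t :=
    monotone_of_hasDerivAt_nonneg hu' fun t => sub_nonneg.2 (hm t)
  have hu_mono : MonotoneOn (fun t => g t - m / 2 * t ^ 2) (Ici 0) := by
    refine monotoneOn_of_hasDerivWithinAt_nonneg (convex_Ici 0)
      (fun t _ => (hu t).continuousAt.continuousWithinAt) (fun t _ => (hu t).hasDerivWithinAt)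
      fun t ht => ?_
    simpa [h0] using hu'_mono (interior_subset ht : (0 : ℝ) ≤ t)
  have := hu_mono self_mem_Ici (mem_Ici.2 zero_le_one) zero_le_one
  simp only at this
  linarith

lemma hasDerivAt_smul_const_self {F : Type*} [NormedAddCommGroup F] [NormedSpace ℝ F] (x : F)
    (t : ℝ) : HasDerivAt (fun s : ℝ => s • x) x t := by
  simpa using (hasDerivAt_id t).smul_const x

section LineRestriction

variable {E : Type*} [NormedAddCommGroup E] [InnerProductSpace ℝ E] [CompleteSpace E]
  {f : E → ℝ}

lemma hasDerivAt_comp_smul (hf : Differentiable ℝ f) (x : E) (t : ℝ) :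
    HasDerivAt (fun s : ℝ => f (s • x)) (inner ℝ (gradient f (t • x)) x) t := by
  rw [inner_gradient_left]
  exact (hf (t • x)).hasFDerivAt.comp_hasDerivAt t (hasDerivAt_smul_const_self x t)

lemma hasDerivAt_inner_gradient_comp_smul (hf : Differentiable ℝ (gradient f)) (x : E) (t : ℝ) :
    HasDerivAt (fun s : ℝ => inner ℝ (gradient f (s • x)) x)
      (inner ℝ (fderiv ℝ (gradient f) (t • x) x) x) t := by
  have h := (hf (t • x)).hasFDerivAt.comp_hasDerivAt t (hasDerivAt_smul_const_self x t)
  simpa using h.inner ℝ (hasDerivAt_const t x)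

lemma ContDiff.differentiable_gradient (hf : ContDiff ℝ 2 f) : Differentiable ℝ (gradient f) :=
  (InnerProductSpace.toDual ℝ E).symm.toContinuousLinearEquiv.differentiable.comp
    ((hf.fderiv_right (m := 1) (by norm_num)).differentiable one_ne_zero)

lemma add_mul_sq_norm_div_two_le (hf : ContDiff ℝ 2 f) (hmin : gradient f 0 = 0) {m : ℝ}
    (hconv : ∀ x v : E, m * ‖v‖ ^ 2 ≤ inner ℝ (fderiv ℝ (gradient f) x v) v) (x : E) :
    f 0 + m * ‖x‖ ^ 2 / 2 ≤ f x := by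
  simpa using add_div_two_le_of_hasDerivAt_of_le
    (hasDerivAt_comp_smul (hf.differentiable two_ne_zero) x)
    (hasDerivAt_inner_gradient_comp_smul hf.differentiable_gradient x)
    (by simp [hmin]) fun t => hconv (t • x) x

lemma le_add_mul_sq_norm_div_two (hf : ContDiff ℝ 2 f) (hmin : gradient f 0 = 0) {M : ℝ}
    (hsmooth : ∀ x v : E, inner ℝ (fderiv ℝ (gradient f) x v) v ≤ M * ‖v‖ ^ 2) (x : E) :
    f x ≤ f 0 + M * ‖x‖ ^ 2 / 2 := by
  have := add_div_two_le_of_hasDerivAt_of_le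
    (fun t => (hasDerivAt_comp_smul (hf.differentiable two_ne_zero) x t).neg)
    (fun t => (hasDerivAt_inner_gradient_comp_smul hf.differentiable_gradient x t).neg)
    (by simp [hmin]) fun t => neg_le_neg (hsmooth (t • x) x)
  simp only [Pi.neg_apply, zero_smul, one_smul] at this
  linarith

end LineRestriction

lemma rpow_mul_rpow_one_sub_le {r q C α : ℝ} (hr : 0 ≤ r) (hq : 0 < q) (hrq : r ≤ C * q)
    (hα : 1 ≤ α) : r ^ α * q ^ (1 - α) ≤ C ^ (α - 1) * r := by
  have hdiv : r / q ≤ C := (div_le_iff₀ hq).2 hrq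
  calc r ^ α * q ^ (1 - α) = (r / q) ^ (α - 1) * r := by
        have hpow : r ^ α = r ^ (α - 1) * r := by
          rw [← rpow_add_one' hr (by linarith), sub_add_cancel]
        rw [hpow, div_rpow hr hq.le, show 1 - α = -(α - 1) by ring, rpow_neg hq.le]
        ring
    _ ≤ C ^ (α - 1) * r := by gcongr

lemma renyiDiv_le_log_of_le_mul {d : ℕ} {R Q : EuclideanSpace ℝ (Fin d) → ℝ} {C α : ℝ}
    (hR : ∀ x, 0 ≤ R x) (hR1 : ∫ x, R x = 1) (hQ : ∀ x, 0 < Q x) (hC : 1 ≤ C)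
    (hRQ : ∀ x, R x ≤ C * Q x) (hα : 1 ≤ α) :
    renyiDiv α R Q ≤ log C := by
  rcases hα.eq_or_lt with rfl | hα
  -- `renyiDiv 1 R Q = 0` because `(1 - 1)⁻¹ = 0`.
  · simpa [renyiDiv] using log_nonneg hC
  have hnonneg : ∀ x, 0 ≤ R x ^ α * Q x ^ (1 - α) := fun x =>
    mul_nonneg (rpow_nonneg (hR x) _) (rpow_nonneg (hQ x).le _)
  have hint : ∫ x, R x ^ α * Q x ^ (1 - α) ≤ C ^ (α - 1) := by
    have hRint : Integrable R := .of_integral_ne_zero (by simp [hR1])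
    calc ∫ x, R x ^ α * Q x ^ (1 - α) ≤ ∫ x, C ^ (α - 1) * R x :=
          integral_mono_of_nonneg (.of_forall hnonneg)
            (hRint.const_mul _)
            (.of_forall fun x => rpow_mul_rpow_one_sub_le (hR x) (hQ x) (hRQ x) hα.le)
      _ = C ^ (α - 1) := by rw [integral_const_mul, hR1, mul_one]
  have hlog : log (∫ x, R x ^ α * Q x ^ (1 - α)) ≤ (α - 1) * log C := by
    rw [← log_rpow (by linarith)]
    rcases (integral_nonneg hnonneg : 0 ≤ ∫ x, R x ^ α * Q x ^ (1 - α)).eq_or_lt with h | h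
    · rw [← h, log_zero]
      exact log_nonneg (one_le_rpow hC (by linarith))
    · exact log_le_log h hint
  rw [renyiDiv, inv_mul_le_iff₀ (by linarith)]
  exact hlog

section Gaussian

variable {V : Type*} [NormedAddCommGroup V] [InnerProductSpace ℝ V] [FiniteDimensional ℝ V]
  [MeasurableSpace V] [BorelSpace V]

lemma exp_neg_apply_zero_le_rpow {f : V → ℝ} {L : ℝ} (hL : 0 < L)
    (hup : ∀ x, f x ≤ f 0 + L * ‖x‖ ^ 2 / 2) (hprob : ∫ x, exp (-f x) = 1) :
    exp (-f 0) ≤ (L / (2 * π)) ^ (Module.finrank ℝ V / 2 : ℝ) := by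
  have hgauss :
      ∫ x : V, exp (-(L / 2) * ‖x‖ ^ 2) = (2 * π / L) ^ (Module.finrank ℝ V / 2 : ℝ) := by
    rw [GaussianFourier.integral_rexp_neg_mul_sq_norm (half_pos hL)]
    congr 1
    field_simp
  have hpos : 0 < (2 * π / L) ^ (Module.finrank ℝ V / 2 : ℝ) := by positivity
  have hmass : exp (-f 0) * (2 * π / L) ^ (Module.finrank ℝ V / 2 : ℝ) ≤ 1 := by
    rw [← hgauss, ← integral_const_mul, ← hprob]
    refine integral_mono ((Integrable.of_integral_ne_zero (hgauss ▸ hpos.ne')).const_mul _)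
      (.of_integral_ne_zero (by simp [hprob])) fun x => ?_
    rw [← exp_add]
    exact exp_le_exp.2 (by linarith [hup x])
  rwa [← inv_div, inv_rpow (by positivity), ← one_div, le_div_iff₀ hpos]

end Gaussian

lemma gaussDensity_one_zero {d : ℕ} (x : EuclideanSpace ℝ (Fin d)) :
    gaussDensity 1 0 x = exp (-‖x‖ ^ 2 / 2) / (2 * π) ^ ((d : ℝ) / 2) := by
  rw [gaussDensity, neg_div, rpow_neg (by positivity)]
  simp only [mul_one, sub_zero]
  ring

lemma exp_neg_le_rpow_mul_gaussDensity {d : ℕ} {f : EuclideanSpace ℝ (Fin d) → ℝ} {L : ℝ}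
    (hL : 0 < L) (hlow : ∀ x, f 0 + ‖x‖ ^ 2 / 2 ≤ f x) (hup : ∀ x, f x ≤ f 0 + L * ‖x‖ ^ 2 / 2)
    (hprob : ∫ x, exp (-f x) = 1) (x : EuclideanSpace ℝ (Fin d)) :
    exp (-f x) ≤ L ^ ((d : ℝ) / 2) * gaussDensity 1 0 x := by
  have h0 := exp_neg_apply_zero_le_rpow hL hup hprob
  rw [finrank_euclideanSpace_fin] at h0
  calc exp (-f x) ≤ exp (-f 0) * exp (-‖x‖ ^ 2 / 2) := by
        rw [← exp_add]
        exact exp_le_exp.2 (by linarith [hlow x])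
    _ ≤ (L / (2 * π)) ^ ((d : ℝ) / 2) * exp (-‖x‖ ^ 2 / 2) := by gcongr
    _ = L ^ ((d : ℝ) / 2) * gaussDensity 1 0 x := by
        rw [gaussDensity_one_zero, div_rpow hL.le (by positivity)]
        ring

/-- If `R = e^{-f}` is a probability density with `f` 1-strongly convex, `L`-smooth,
with global minimum at `0`, and `Q₀ = N(0, I_d)`, then for all `α ≥ 1`,
`D_α(R ‖ Q₀) ≤ d ln L`. -/
theorem renyiDiv_target_init_le {d : ℕ} (L : ℝ) (f : EuclideanSpace ℝ (Fin d) → ℝ)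
    (hf : ContDiff ℝ 2 f)
    (hconv : ∀ x v : EuclideanSpace ℝ (Fin d),
      ‖v‖ ^ 2 ≤ (inner ℝ (fderiv ℝ (gradient f) x v) v : ℝ))
    (hsmooth : ∀ x v : EuclideanSpace ℝ (Fin d),
      (inner ℝ (fderiv ℝ (gradient f) x v) v : ℝ) ≤ L * ‖v‖ ^ 2)
    (hmin : gradient f 0 = 0)
    (hprob : ∫ x, Real.exp (-f x) = 1)
    (α : ℝ) (hα : 1 ≤ α) :
    renyiDiv α (fun x => Real.exp (-f x))
        (gaussDensity 1 (0 : EuclideanSpace ℝ (Fin d))) ≤ (d : ℝ) * Real.log L := by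
  have hlow : ∀ x, f 0 + ‖x‖ ^ 2 / 2 ≤ f x := by
    simpa using add_mul_sq_norm_div_two_le hf hmin (m := 1) (by simpa using hconv)
  have hR : ∀ x, 0 ≤ exp (-f x) := fun x => (exp_pos _).le
  have hQ : ∀ x, 0 < gaussDensity 1 (0 : EuclideanSpace ℝ (Fin d)) x := fun x => by
    rw [gaussDensity_one_zero]
    positivity
  rcases Nat.eq_zero_or_pos d with rfl | hd
  -- In dimension `0` nothing bounds `L` from below, so run the argument with `L = 1` instead.
  · have hup : ∀ x : EuclideanSpace ℝ (Fin 0), f x ≤ f 0 + 1 * ‖x‖ ^ 2 / 2 := fun x => by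
      simp [Subsingleton.elim x 0]
    simpa using renyiDiv_le_log_of_le_mul hR hprob hQ (by simp)
      (exp_neg_le_rpow_mul_gaussDensity one_pos hlow hup hprob) hα
  · have hL : 1 ≤ L := by
      simpa using (hconv 0 (EuclideanSpace.single ⟨0, hd⟩ 1)).trans (hsmooth 0 _)
    calc renyiDiv α (fun x => exp (-f x)) (gaussDensity 1 0) ≤ log (L ^ ((d : ℝ) / 2)) :=
          renyiDiv_le_log_of_le_mul hR hprob hQ (one_le_rpow hL (by positivity))
            (exp_neg_le_rpow_mul_gaussDensity (by linarith) hlow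
              (le_add_mul_sq_norm_div_two hf hmin hsmooth) hprob) hα
      _ ≤ d * log L := by
          rw [log_rpow (by linarith)]
          linarith [mul_nonneg (Nat.cast_nonneg (α := ℝ) d) (log_nonneg hL)]
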